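/- Let R = ⟨A, S, R, D, γ⟩ be an RDP whose dynamics are represented by a finite transducer T = ⟨Q, q₀, S, τ, θ⟩ with n = |Q| states and reachability ρ > 0. Let p ∈ (0,1) and let A be the PDFA associated to R and stop probability p. For a state q ∈ Q, define the visit probability of q in A as Σ_{x ∈ Min(q)} λ(q₀, x), where Min(q) is the set of strings x ∈ Σ* with τ'(q₀,x) = q and τ'(q₀,x') ≠ q for every proper prefix x' of x. Then for every state q whose visit probability is non-zero, the visit probability of q is at least ρ·(1−p)^n. -/

import Mathlib

/-- Extension of a deterministic transition function to strings. -/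
def tauStar {Q S : Type*} (τ : Q → S → Q) : Q → List S → Q
  | q, [] => q
  | q, s :: h => tauStar τ (τ q s) h

/-- Probability of a history under the uniform policy:
`P_u(s₁…s_k) = Π_i (1/|A|)·∑_{a,r} D(s_i,r | s₁…s_{i−1}, a)`;
the first argument accumulates the prefix of the history consumed so far. -/
noncomputable def puAux {A S R : Type*} [Fintype A] [Fintype R]
    (D : List S → A → S → R → ℝ) : List S → List S → ℝ
  | _, [] => 1
  | pre, s :: rest =>
      ((1 / (Fintype.card A : ℝ)) * ∑ a : A, ∑ r : R, D pre a s r) *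
        puAux D (pre ++ [s]) rest

/-- Extension of a PDFA probability function to strings (prefix probability). -/
noncomputable def lamStar {Q Sym : Type*} (tau' : Q → Sym → Q) (lam : Q → Sym → ℝ) :
    Q → List Sym → ℝ
  | _, [] => 1
  | q, σ :: x => lam q σ * lamStar tau' lam (tau' q σ) x

lemma tauStar_append {Q S : Type*} (τ : Q → S → Q) (q : Q) (l1 l2 : List S) :
    tauStar τ q (l1 ++ l2) = tauStar τ (tauStar τ q l1) l2 := by
  induction l1 generalizing q with
  | nil => simp [tauStar]
  | cons s t ih => simp [tauStar, ih]

lemma tauStar_proj {Q S A R : Type*} (τ : Q → S → Q) (tau' : Q → A × S × R → Q)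
    (htau' : ∀ q σ, tau' q σ = τ q σ.2.1) (q : Q) (x : List (A × S × R)) :
    tauStar tau' q x = tauStar τ q (x.map (fun σ => σ.2.1)) := by
  induction x generalizing q with
  | nil => simp [tauStar]
  | cons σ y ih => simp [tauStar, htau', ih]

open Classical in
noncomputable def pvFiber {A S R : Type*} [Fintype A] [Fintype R] :
    List S → Finset (List (A × S × R))
  | [] => {[]}
  | s :: t => ((Finset.univ : Finset (A × R)) ×ˢ pvFiber t).image
      (fun p => (p.1.1, s, p.1.2) :: p.2)

lemma mem_pvFiber {A S R : Type*} [Fintype A] [Fintype R] (h : List S)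
    (x : List (A × S × R)) :
    x ∈ pvFiber h ↔ x.map (fun σ => σ.2.1) = h := by
  induction h generalizing x with
  | nil =>
    simp [pvFiber, List.map_eq_nil_iff]
  | cons s t ih =>
    simp only [pvFiber, Finset.mem_image, Finset.mem_product]
    constructor
    · rintro ⟨⟨⟨a, r⟩, y⟩, ⟨-, hy⟩, rfl⟩
      simp [(ih _).1 hy]
    · intro hx
      cases x with
      | nil => simp at hx
      | cons σ y =>
        obtain ⟨a, s', r⟩ := σ
        simp only [List.map_cons, List.cons.injEq] at hx
        obtain ⟨rfl, hy⟩ := hx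
        exact ⟨⟨(a, r), y⟩, ⟨⟨Finset.mem_univ _, (ih y).2 hy⟩, rfl⟩⟩

lemma sum_pvFiber_cons {A S R M : Type*} [Fintype A] [Fintype R] [AddCommMonoid M]
    (s : S) (t : List S) (f : List (A × S × R) → M) :
    ∑ x ∈ pvFiber (s :: t), f x
      = ∑ a : A, ∑ r : R, ∑ y ∈ pvFiber t, f ((a, s, r) :: y) := by
  classical
  rw [show (pvFiber (s :: t) : Finset (List (A × S × R)))
      = ((Finset.univ : Finset (A × R)) ×ˢ pvFiber t).image
        (fun p => (p.1.1, s, p.1.2) :: p.2) from by simp [pvFiber]]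
  rw [Finset.sum_image, Finset.sum_product, Fintype.sum_prod_type]
  rintro ⟨⟨a, r⟩, y⟩ - ⟨⟨a', r'⟩, y'⟩ - hxy
  simp only [List.cons.injEq, Prod.mk.injEq] at hxy
  obtain ⟨⟨rfl, -, rfl⟩, rfl⟩ := hxy
  rfl


/-- For an RDP with dynamics transducer `⟨Q, q₀, S, τ, θ⟩` with `n = |Q|`
states and reachability `ρ > 0`, in the PDFA associated to the RDP and stop probability
`p`, every state with non-zero visit probability has visit probability at least
`ρ·(1−p)^n`. -/
theorem pdfa_visit_probability_lower_bound
    {A S Q R : Type*} [Fintype A] [Nonempty A] [Fintype S] [Fintype Q] [Fintype R]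
    -- stop probability and reachability
    (p : ℝ) (hp0 : 0 < p) (hp1 : p < 1)
    (ρ : ℝ) (hρ : 0 < ρ)
    -- dynamics function of the RDP, represented by the transducer ⟨Q, q₀, S, τ, θ⟩
    (D : List S → A → S → R → ℝ)
    (hD0 : ∀ h a s r, 0 ≤ D h a s r)
    (hD1 : ∀ h a, (∑ s : S, ∑ r : R, D h a s r) = 1)
    (q₀ : Q) (τ : Q → S → Q) (θ : Q → A → S → R → ℝ)
    (hrep : ∀ h a s r, D h a s r = θ (tauStar τ q₀ h) a s r)
    -- the associated PDFA on symbols (a,s,r): transitions τ'(q,(a,s,r)) = τ(q,s) and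
    -- probabilities λ(q,(a,s,r)) = ((1−p)/|A|)·θ(q)(a,s,r)
    (tau' : Q → A × S × R → Q)
    (htau' : ∀ q σ, tau' q σ = τ q σ.2.1)
    (lam : Q → A × S × R → ℝ)
    (hlam : ∀ q σ, lam q σ = ((1 - p) / (Fintype.card A : ℝ)) * θ q σ.1 σ.2.1 σ.2.2)
    -- reachability: ρ lower-bounds, for every transducer state q reachable with non-zero
    -- probability, the probability under the uniform policy of the histories in First(q)
    -- (first reached at the end, within n steps)
    (hreach : ∀ q : Q, (∃ h : List S, tauStar τ q₀ h = q ∧ 0 < puAux D [] h) →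
      ρ ≤ ∑' h : {h : List S // h.length ≤ Fintype.card Q ∧ tauStar τ q₀ h = q ∧
            ∀ k < h.length, tauStar τ q₀ (h.take k) ≠ q},
          puAux D [] h.val)
    -- the visit probability of a PDFA state q: ∑_{x ∈ Min(q)} λ(q₀,x), where Min(q) is
    -- the set of strings over the alphabet Σ that reach q exactly at their end
    (visit : Q → ℝ)
    (hvisit : ∀ q : Q, visit q =
      ∑' x : {x : List (A × S × R) //
          (∀ σ ∈ x, ∃ h : List S, 0 < D h σ.1 σ.2.1 σ.2.2) ∧
          tauStar tau' q₀ x = q ∧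
          ∀ k < x.length, tauStar tau' q₀ (x.take k) ≠ q},
        lamStar tau' lam q₀ x.val) :
    ∀ q : Q, visit q ≠ 0 → ρ * (1 - p) ^ (Fintype.card Q) ≤ visit q := by
  classical
  intro q hq
  set n := Fintype.card Q with hn
  have hcardA : (0 : ℝ) < (Fintype.card A : ℝ) := by
    exact_mod_cast Fintype.card_pos
  have hc : (0 : ℝ) ≤ (1 - p) / (Fintype.card A : ℝ) :=
    div_nonneg (by linarith) hcardA.le
  -- θ-values at reachable states are D-values
  have hθ : ∀ (pre : List S) (a : A) (s : S) (r : R),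
      θ (tauStar τ q₀ pre) a s r = D pre a s r := fun pre a s r => (hrep pre a s r).symm
  -- next state along a path
  have hnext : ∀ (pre : List S) (σ : A × S × R),
      tau' (tauStar τ q₀ pre) σ = tauStar τ q₀ (pre ++ [σ.2.1]) := by
    intro pre σ
    rw [htau', tauStar_append]
    rfl
  -- nonnegativity of lamStar along reachable states
  have lemNN : ∀ (x : List (A × S × R)) (pre : List S),
      0 ≤ lamStar tau' lam (tauStar τ q₀ pre) x := by
    intro x
    induction x with
    | nil => intro pre; simp [lamStar]
    | cons σ y ih =>
      intro pre
      have h1 : 0 ≤ lam (tauStar τ q₀ pre) σ := by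
        rw [hlam, hθ]
        exact mul_nonneg hc (hD0 _ _ _ _)
      have h2 : 0 ≤ lamStar tau' lam (tau' (tauStar τ q₀ pre) σ) y := by
        rw [hnext]; exact ih _
      calc (0:ℝ) ≤ lam (tauStar τ q₀ pre) σ * lamStar tau' lam (tau' (tauStar τ q₀ pre) σ) y :=
            mul_nonneg h1 h2
        _ = lamStar tau' lam (tauStar τ q₀ pre) (σ :: y) := rfl
  -- support condition from nonvanishing lamStar
  have lemSupp : ∀ (x : List (A × S × R)) (pre : List S),
      lamStar tau' lam (tauStar τ q₀ pre) x ≠ 0 →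
      ∀ σ ∈ x, ∃ h : List S, 0 < D h σ.1 σ.2.1 σ.2.2 := by
    intro x
    induction x with
    | nil => intro pre _ σ hσ; simp at hσ
    | cons σ' y ih =>
      intro pre hne σ hσ
      have hsplit : lamStar tau' lam (tauStar τ q₀ pre) (σ' :: y)
          = lam (tauStar τ q₀ pre) σ' *
            lamStar tau' lam (tau' (tauStar τ q₀ pre) σ') y := rfl
      rw [hsplit] at hne
      have h1 := left_ne_zero_of_mul hne
      have h2 := right_ne_zero_of_mul hne
      rw [hnext] at h2
      rcases List.mem_cons.1 hσ with rfl | hmem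
      · refine ⟨pre, ?_⟩
        rw [hlam, hθ] at h1
        have hDne : D pre σ.1 σ.2.1 σ.2.2 ≠ 0 := right_ne_zero_of_mul h1
        exact lt_of_le_of_ne (hD0 _ _ _ _) (Ne.symm hDne)
      · exact ih _ h2 σ hmem
  -- nonnegativity of puAux
  have lemPUnn : ∀ (h pre : List S), 0 ≤ puAux D pre h := by
    intro h
    induction h with
    | nil => intro pre; simp [puAux]
    | cons s t ih =>
      intro pre
      have h1 : (0:ℝ) ≤ (1 / (Fintype.card A : ℝ)) * ∑ a : A, ∑ r : R, D pre a s r := by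
        apply mul_nonneg (by positivity)
        exact Finset.sum_nonneg fun a _ => Finset.sum_nonneg fun r _ => hD0 _ _ _ _
      calc (0:ℝ) ≤ ((1 / (Fintype.card A : ℝ)) * ∑ a : A, ∑ r : R, D pre a s r) *
            puAux D (pre ++ [s]) t := mul_nonneg h1 (ih _)
        _ = puAux D pre (s :: t) := rfl
  -- positivity of puAux from nonvanishing lamStar
  have lemPos : ∀ (x : List (A × S × R)) (pre : List S),
      lamStar tau' lam (tauStar τ q₀ pre) x ≠ 0 →
      0 < puAux D pre (x.map (fun σ => σ.2.1)) := by
    intro x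
    induction x with
    | nil => intro pre _; simp [puAux]
    | cons σ y ih =>
      intro pre hne
      have hsplit : lamStar tau' lam (tauStar τ q₀ pre) (σ :: y)
          = lam (tauStar τ q₀ pre) σ *
            lamStar tau' lam (tau' (tauStar τ q₀ pre) σ) y := rfl
      rw [hsplit] at hne
      have h1 := left_ne_zero_of_mul hne
      have h2 := right_ne_zero_of_mul hne
      rw [hnext] at h2
      have hDpos : 0 < D pre σ.1 σ.2.1 σ.2.2 := by
        rw [hlam, hθ] at h1
        exact lt_of_le_of_ne (hD0 _ _ _ _) (Ne.symm (right_ne_zero_of_mul h1))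
      have hsum : 0 < ∑ a : A, ∑ r : R, D pre a σ.2.1 r := by
        have hle : D pre σ.1 σ.2.1 σ.2.2 ≤ ∑ r : R, D pre σ.1 σ.2.1 r :=
          Finset.single_le_sum (fun r _ => hD0 pre σ.1 σ.2.1 r) (Finset.mem_univ _)
        have hle2 : (∑ r : R, D pre σ.1 σ.2.1 r) ≤ ∑ a : A, ∑ r : R, D pre a σ.2.1 r :=
          Finset.single_le_sum (f := fun a => ∑ r : R, D pre a σ.2.1 r)
            (fun a _ => Finset.sum_nonneg fun r _ => hD0 _ _ _ _) (Finset.mem_univ _)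
        linarith
      have hpos1 : (0:ℝ) < (1 / (Fintype.card A : ℝ)) * ∑ a : A, ∑ r : R, D pre a σ.2.1 r := by
        apply mul_pos (by positivity) hsum
      have := ih (pre ++ [σ.2.1]) h2
      calc (0:ℝ) < ((1 / (Fintype.card A : ℝ)) * ∑ a : A, ∑ r : R, D pre a σ.2.1 r) *
            puAux D (pre ++ [σ.2.1]) (y.map (fun σ => σ.2.1)) := mul_pos hpos1 this
        _ = puAux D pre ((σ :: y).map (fun σ => σ.2.1)) := rfl
  -- key fiber-sum identity
  have key : ∀ (h pre : List S),
      ∑ x ∈ pvFiber h, lamStar tau' lam (tauStar τ q₀ pre) x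
        = (1 - p) ^ h.length * puAux D pre h := by
    intro h
    induction h with
    | nil => intro pre; simp [pvFiber, lamStar, puAux]
    | cons s t ih =>
      intro pre
      rw [sum_pvFiber_cons]
      have hstep : ∀ (a : A) (r : R),
          ∑ y ∈ pvFiber t, lamStar tau' lam (tauStar τ q₀ pre) ((a, s, r) :: y)
            = ((1 - p) / (Fintype.card A : ℝ) *
                ((1 - p) ^ t.length * puAux D (pre ++ [s]) t)) * D pre a s r := by
        intro a r
        have h1 : ∀ y : List (A × S × R),
            lamStar tau' lam (tauStar τ q₀ pre) ((a, s, r) :: y)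
              = ((1 - p) / (Fintype.card A : ℝ)) * D pre a s r *
                lamStar tau' lam (tauStar τ q₀ (pre ++ [s])) y := by
          intro y
          have h0 : lamStar tau' lam (tauStar τ q₀ pre) ((a, s, r) :: y)
              = lam (tauStar τ q₀ pre) (a, s, r) *
                lamStar tau' lam (tau' (tauStar τ q₀ pre) (a, s, r)) y := rfl
          rw [h0, hnext pre (a, s, r), hlam, hθ]
        simp only [h1]
        rw [← Finset.mul_sum, ih (pre ++ [s])]
        ring
      simp only [hstep]
      simp only [← Finset.mul_sum]
      show _ = (1 - p) ^ ((s :: t).length) *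
        (((1 / (Fintype.card A : ℝ)) * ∑ a : A, ∑ r : R, D pre a s r) *
          puAux D (pre ++ [s]) t)
      simp only [List.length_cons, pow_succ]
      field_simp
  -- the set of "first-visit" histories is finite
  have hfin : {h : List S | h.length ≤ n ∧ tauStar τ q₀ h = q ∧
      ∀ k < h.length, tauStar τ q₀ (h.take k) ≠ q}.Finite :=
    (List.finite_length_le S n).subset fun h hh => hh.1
  set F : Finset (List S) := hfin.toFinset with hF
  have hmemF : ∀ h : List S, h ∈ F ↔ h.length ≤ n ∧ tauStar τ q₀ h = q ∧
      ∀ k < h.length, tauStar τ q₀ (h.take k) ≠ q := fun h => hfin.mem_toFinset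
  -- rewrite the visit probability
  rw [hvisit q] at hq ⊢
  set f : {x : List (A × S × R) //
      (∀ σ ∈ x, ∃ h : List S, 0 < D h σ.1 σ.2.1 σ.2.2) ∧
      tauStar tau' q₀ x = q ∧
      ∀ k < x.length, tauStar tau' q₀ (x.take k) ≠ q} → ℝ :=
    fun x => lamStar tau' lam q₀ x.val with hf
  have hsumm : Summable f := by
    by_contra hns
    exact hq (tsum_eq_zero_of_not_summable hns)
  -- a nonzero term exists
  have hex : ∃ i, f i ≠ 0 := by
    by_contra hno
    push_neg at hno
    exact hq ((tsum_congr hno).trans tsum_zero)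
  obtain ⟨⟨x₀, hx₀supp, hx₀q, hx₀min⟩, hx₀ne⟩ := hex
  have hx₀ne' : lamStar tau' lam (tauStar τ q₀ []) x₀ ≠ 0 := hx₀ne
  -- trigger the reachability hypothesis
  have hre : ρ ≤ ∑' h : {h : List S // h.length ≤ n ∧ tauStar τ q₀ h = q ∧
        ∀ k < h.length, tauStar τ q₀ (h.take k) ≠ q},
      puAux D [] h.val := by
    apply hreach q
    refine ⟨x₀.map (fun σ => σ.2.1), ?_, lemPos x₀ [] hx₀ne'⟩
    rw [← tauStar_proj τ tau' htau']
    exact hx₀q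
  -- convert the tsum in hre to a finite sum over F
  haveI hft : Fintype {h : List S // h.length ≤ n ∧ tauStar τ q₀ h = q ∧
      ∀ k < h.length, tauStar τ q₀ (h.take k) ≠ q} := hfin.fintype
  have hre' : ρ ≤ ∑ h ∈ F, puAux D [] h := by
    rw [tsum_fintype] at hre
    rwa [Finset.sum_subtype F (fun h => hmemF h) (fun h => puAux D [] h)]
  -- disjointness of fibers
  have hdisj : (↑F : Set (List S)).PairwiseDisjoint
      (pvFiber : List S → Finset (List (A × S × R))) := by
    intro h1 _ h2 _ hne
    refine Finset.disjoint_left.2 fun x hx1 hx2 => hne ?_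
    rw [← (mem_pvFiber h1 x).1 hx1, (mem_pvFiber h2 x).1 hx2]
  -- the main chain
  have hpow_nonneg : (0:ℝ) ≤ (1 - p) ^ n := pow_nonneg (by linarith) n
  calc ρ * (1 - p) ^ n
      ≤ (∑ h ∈ F, puAux D [] h) * (1 - p) ^ n :=
        mul_le_mul_of_nonneg_right hre' hpow_nonneg
    _ = ∑ h ∈ F, puAux D [] h * (1 - p) ^ n := Finset.sum_mul _ _ _
    _ ≤ ∑ h ∈ F, (1 - p) ^ h.length * puAux D [] h := by
        refine Finset.sum_le_sum fun h hh => ?_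
        rw [mul_comm]
        exact mul_le_mul_of_nonneg_right
          (pow_le_pow_of_le_one (by linarith) (by linarith) ((hmemF h).1 hh).1)
          (lemPUnn h [])
    _ = ∑ h ∈ F, ∑ x ∈ pvFiber h, lamStar tau' lam q₀ x := by
        refine Finset.sum_congr rfl fun h _ => ?_
        exact (key h []).symm
    _ = ∑ x ∈ F.biUnion pvFiber, lamStar tau' lam q₀ x := (Finset.sum_biUnion hdisj).symm
    _ = ∑ x ∈ (F.biUnion pvFiber).filter (fun x =>
          (∀ σ ∈ x, ∃ h : List S, 0 < D h σ.1 σ.2.1 σ.2.2) ∧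
          tauStar tau' q₀ x = q ∧
          ∀ k < x.length, tauStar tau' q₀ (x.take k) ≠ q),
        lamStar tau' lam q₀ x := by
        symm
        apply Finset.sum_filter_of_ne
        intro x hx hne
        obtain ⟨h, hhF, hxf⟩ := Finset.mem_biUnion.1 hx
        have hmap := (mem_pvFiber h x).1 hxf
        obtain ⟨hlen, hq', hmin⟩ := (hmemF h).1 hhF
        have hxlen : x.length = h.length := by rw [← hmap, List.length_map]
        refine ⟨lemSupp x [] hne, ?_, ?_⟩
        · rw [tauStar_proj τ tau' htau', hmap]; exact hq'
        · intro k hk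
          rw [tauStar_proj τ tau' htau', List.map_take, hmap]
          exact hmin k (by omega)
    _ = ∑ i ∈ (F.biUnion pvFiber).subtype (fun x =>
          (∀ σ ∈ x, ∃ h : List S, 0 < D h σ.1 σ.2.1 σ.2.2) ∧
          tauStar tau' q₀ x = q ∧
          ∀ k < x.length, tauStar tau' q₀ (x.take k) ≠ q), f i := by
        rw [Finset.sum_subtype_eq_sum_filter]
    _ ≤ ∑' i, f i := by
        apply Summable.sum_le_tsum _ (fun i _ => lemNN i.val []) hsumm
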